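/- arXiv:2002.02365 — 5 statements merged into one kernel-verified Lean document; each statement's English description precedes it below -/
import Mathlib

section
/- Let B be a unital C*-algebra, n ≥ 2 a natural number, and y₁,…,yₙ ∈ B with ‖Σᵢ yᵢ*yᵢ‖ ≤ 1. Set d = (1 − Σᵢ yᵢ*yᵢ)^{1/2} and define ỹ₁ = [[y₁, 0], [d, 0]], ỹ₂ = [[y₂, 0], [0, 1]], and ỹᵢ = [[yᵢ, 0], [0, 0]] (3 ≤ i ≤ n) in M₂(B). Let J be a two-sided ideal of B with d ∈ J. Then for every pair (m, b) in the submonoid of the product monoid M₂(B) × B generated by the pairs (ỹᵢ, yᵢ) and (ỹᵢ*, yᵢ*) (1 ≤ i ≤ n), the (1,1)-entry of m is congruent to b modulo J, i.e. m₁₁ − b ∈ J. -/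
open scoped Matrix

/-!
Modulo `J`, the pairs `(m, b)` whose matrix `m` has `(0,0)`-entry congruent to `b` and both
off-diagonal entries in `J` form a submonoid of `M₂(B) × B`: in a product the only new term of
the corner entry is `m₀₁ m'₁₀ ∈ J`. Each dilation `ỹᵢ` has corner `yᵢ`, upper-right entry `0` and
lower-left entry `d` or `0`, so the generators and (as `d` is self-adjoint) their adjoints lie in
this submonoid.
-/

namespace TwoSidedIdeal

variable {R : Type*} [Ring R] (J : TwoSidedIdeal R)

def cornerSubmonoid : Submonoid (Matrix (Fin 2) (Fin 2) R × R) where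
  carrier := {q | q.1 0 0 - q.2 ∈ J ∧ q.1 0 1 ∈ J ∧ q.1 1 0 ∈ J}
  one_mem' := by simp [J.zero_mem]
  mul_mem' := by
    rintro ⟨m, a⟩ ⟨m', b⟩ ⟨hcorner, hupper, hlower⟩ ⟨hcorner', hupper', hlower'⟩
    show (m * m') 0 0 - a * b ∈ J ∧ (m * m') 0 1 ∈ J ∧ (m * m') 1 0 ∈ J
    simp only [Matrix.mul_apply, Fin.sum_univ_two]
    have hsplit : m 0 0 * m' 0 0 + m 0 1 * m' 1 0 - a * b =
        m 0 0 * (m' 0 0 - b) + (m 0 0 - a) * b + m 0 1 * m' 1 0 := by noncomm_ring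
    refine ⟨?_, ?_, ?_⟩
    · rw [hsplit]
      exact J.add_mem (J.add_mem (J.mul_mem_left _ _ hcorner') (J.mul_mem_right _ _ hcorner))
        (J.mul_mem_left _ _ hlower')
    · exact J.add_mem (J.mul_mem_left _ _ hupper') (J.mul_mem_right _ _ hupper)
    · exact J.add_mem (J.mul_mem_right _ _ hlower) (J.mul_mem_left _ _ hlower')

variable {J}

theorem mem_cornerSubmonoid {q : Matrix (Fin 2) (Fin 2) R × R} :
    q ∈ J.cornerSubmonoid ↔ q.1 0 0 - q.2 ∈ J ∧ q.1 0 1 ∈ J ∧ q.1 1 0 ∈ J :=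
  Iff.rfl

theorem dilation_mem_cornerSubmonoid (a c e : R) (hc : c ∈ J) :
    (!![a, 0; c, e], a) ∈ J.cornerSubmonoid :=
  mem_cornerSubmonoid.2 ⟨by simp [J.zero_mem], J.zero_mem, hc⟩

theorem star_dilation_mem_cornerSubmonoid [StarRing R] (a c e : R) (hc : star c ∈ J) :
    (star !![a, 0; c, e], star a) ∈ J.cornerSubmonoid :=
  mem_cornerSubmonoid.2 ⟨by simp [Matrix.star_apply, J.zero_mem], by simpa [Matrix.star_apply],
    by simp [Matrix.star_apply, J.zero_mem]⟩

end TwoSidedIdeal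

theorem entry_sub_mem_ideal_of_mem_closure_dilated_pairs_general
    {B : Type*} [CStarAlgebra B] [PartialOrder B] [StarOrderedRing B]
    (n : ℕ) (y : Fin n → B)
    (d : B) (hd : d = CFC.sqrt (1 - ∑ i, star (y i) * y i))
    (Y : Fin n → Matrix (Fin 2) (Fin 2) B)
    (hY : ∀ i : Fin n, Y i =
      if (i : ℕ) = 0 then !![y i, 0; d, 0]
      else if (i : ℕ) = 1 then !![y i, 0; 0, 1]
      else !![y i, 0; 0, 0])
    (J : TwoSidedIdeal B) (hdJ : d ∈ J) :
    ∀ q ∈ Submonoid.closure {q : Matrix (Fin 2) (Fin 2) B × B |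
        ∃ i : Fin n, q = (Y i, y i) ∨ q = (star (Y i), star (y i))},
      q.1 0 0 - q.2 ∈ J := by
  have hd_star : star d = d := hd ▸ (CFC.sqrt_nonneg _).isSelfAdjoint
  have hY_dilation : ∀ i, ∃ c e, c ∈ J ∧ star c ∈ J ∧ Y i = !![y i, 0; c, e] := by
    intro i
    rw [hY]
    split_ifs
    · exact ⟨d, 0, hdJ, by rwa [hd_star], rfl⟩
    all_goals exact ⟨0, _, J.zero_mem, by simp [J.zero_mem], rfl⟩
  intro q hq
  refine (TwoSidedIdeal.mem_cornerSubmonoid.1 (Submonoid.closure_le.2 ?_ hq)).1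
  rintro _ ⟨i, rfl | rfl⟩ <;> obtain ⟨c, e, hc, hc_star, hYi⟩ := hY_dilation i <;> rw [hYi]
  · exact TwoSidedIdeal.dilation_mem_cornerSubmonoid _ _ _ hc
  · exact TwoSidedIdeal.star_dilation_mem_cornerSubmonoid _ _ _ hc_star

/-- With `ỹᵢ` the 2×2 dilations of the `yᵢ` (where `‖∑ yᵢ* yᵢ‖ ≤ 1` and
`d = (1 - ∑ yᵢ* yᵢ)^{1/2}`), and `J` a two-sided ideal of `B` containing `d`, every pair
`(m, b)` in the submonoid of `M₂(B) × B` generated by the pairs `(ỹᵢ, yᵢ)` and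
`(ỹᵢ*, yᵢ*)` satisfies `m₁₁ - b ∈ J`. -/
theorem entry_sub_mem_ideal_of_mem_closure_dilated_pairs
    {B : Type*} [CStarAlgebra B] [PartialOrder B] [StarOrderedRing B]
    (n : ℕ) (hn : 2 ≤ n) (y : Fin n → B)
    (hy : ‖∑ i, star (y i) * y i‖ ≤ 1)
    (d : B) (hd : d = CFC.sqrt (1 - ∑ i, star (y i) * y i))
    (Y : Fin n → Matrix (Fin 2) (Fin 2) B)
    (hY : ∀ i : Fin n, Y i =
      if (i : ℕ) = 0 then !![y i, 0; d, 0]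
      else if (i : ℕ) = 1 then !![y i, 0; 0, 1]
      else !![y i, 0; 0, 0])
    (J : TwoSidedIdeal B) (hdJ : d ∈ J) :
    ∀ q ∈ Submonoid.closure {q : Matrix (Fin 2) (Fin 2) B × B |
        ∃ i : Fin n, q = (Y i, y i) ∨ q = (star (Y i), star (y i))},
      q.1 0 0 - q.2 ∈ J :=
  entry_sub_mem_ideal_of_mem_closure_dilated_pairs_general n y d hd Y hY J hdJ
end

section
/- Let B and C be unital C*-algebras, π : B → C a unital *-homomorphism, n ≥ 2 a natural number, and y₁,…,yₙ ∈ B with ‖Σᵢ yᵢ*yᵢ‖ ≤ 1 and π(Σᵢ yᵢ*yᵢ) = 1. Set d = (1 − Σᵢ yᵢ*yᵢ)^{1/2} and define ỹ₁ = [[y₁, 0], [d, 0]], ỹ₂ = [[y₂, 0], [0, 1]], and ỹᵢ = [[yᵢ, 0], [0, 0]] (3 ≤ i ≤ n) in M₂(B). Then for every pair (m, c) in the submonoid of the product monoid M₂(B) × C generated by the pairs (ỹᵢ, π(yᵢ)) and (ỹᵢ*, π(yᵢ)*) (1 ≤ i ≤ n), one has π(m₁₁) = c, where m₁₁ is the upper-left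 entry of m. In particular, every *-monomial evaluated at the ỹᵢ has upper-left entry mapping under π to the same *-monomial evaluated at the π(yᵢ). -/
open scoped Matrix

/-!
Since `π(∑ yᵢ* yᵢ) = 1`, the defect `d` is killed by `π`: `π(d)* π(d) = π(d²) = 0`.
Hence under `π` every dilation `ỹᵢ` (and its adjoint) becomes block diagonal with
upper-left corner `π(yᵢ)`, and products of block diagonal matrices multiply corner-wise.
-/

theorem CFC.map_sqrt_eq_zero {A C F : Type*} [NonUnitalCStarAlgebra A] [PartialOrder A]
    [StarOrderedRing A] [NonUnitalNormedRing C] [StarRing C] [CStarRing C] [FunLike F A C]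
    [MulHomClass F A C] [StarHomClass F A C] (f : F) {a : A} (ha : 0 ≤ a) (hfa : f a = 0) :
    f (CFC.sqrt a) = 0 := by
  have hsa : IsSelfAdjoint (CFC.sqrt a) := IsSelfAdjoint.of_nonneg (CFC.sqrt_nonneg a)
  rw [← CStarRing.star_mul_self_eq_zero_iff, ← map_star, ← map_mul, hsa.star_eq,
    CFC.sqrt_mul_sqrt_self a ha, hfa]

namespace Matrix

variable {R S F : Type*} [Semiring R] [Semiring S] [FunLike F R S] [RingHomClass F R S]

/-- The pairs `(m, c)` such that `f` maps `m` entrywise to a block diagonal matrix with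
upper-left corner `c`. -/
def blockDiagCornerSubmonoid (f : F) : Submonoid (Matrix (Fin 2) (Fin 2) R × S) where
  carrier := {q | f (q.1 0 0) = q.2 ∧ f (q.1 0 1) = 0 ∧ f (q.1 1 0) = 0}
  one_mem' := by simp
  mul_mem' := by
    rintro ⟨a, c⟩ ⟨b, c'⟩ ⟨ha₀₀, ha₀₁, ha₁₀⟩ ⟨hb₀₀, hb₀₁, hb₁₀⟩
    simp_all [mul_apply, Fin.sum_univ_two]

variable {f : F}

theorem mem_blockDiagCornerSubmonoid {q : Matrix (Fin 2) (Fin 2) R × S} :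
    q ∈ blockDiagCornerSubmonoid f ↔
      f (q.1 0 0) = q.2 ∧ f (q.1 0 1) = 0 ∧ f (q.1 1 0) = 0 :=
  Iff.rfl

theorem pair_mem_blockDiagCornerSubmonoid {a b e : R} (hb : f b = 0) :
    (!![a, 0; b, e], f a) ∈ blockDiagCornerSubmonoid f := by
  simp [mem_blockDiagCornerSubmonoid, hb]

theorem star_mem_blockDiagCornerSubmonoid [StarRing R] [StarRing S] [StarHomClass F R S]
    {q : Matrix (Fin 2) (Fin 2) R × S} (hq : q ∈ blockDiagCornerSubmonoid f) :
    star q ∈ blockDiagCornerSubmonoid f := by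
  obtain ⟨h₀₀, h₀₁, h₁₀⟩ := hq
  simp [mem_blockDiagCornerSubmonoid, star_apply, map_star, h₀₀, h₀₁, h₁₀]

end Matrix

open Matrix in
theorem starAlgHom_entry_eq_of_mem_closure_dilated_pairs_general
    {B C : Type*} [CStarAlgebra B] [PartialOrder B] [StarOrderedRing B] [CStarAlgebra C]
    (π : B →⋆ₐ[ℂ] C)
    (n : ℕ) (y : Fin n → B)
    (hy : ‖∑ i, star (y i) * y i‖ ≤ 1)
    (hπy : π (∑ i, star (y i) * y i) = 1)
    (d : B) (hd : d = CFC.sqrt (1 - ∑ i, star (y i) * y i))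
    (Y : Fin n → Matrix (Fin 2) (Fin 2) B)
    (hY : ∀ i : Fin n, Y i =
      if (i : ℕ) = 0 then !![y i, 0; d, 0]
      else if (i : ℕ) = 1 then !![y i, 0; 0, 1]
      else !![y i, 0; 0, 0]) :
    ∀ q ∈ Submonoid.closure {q : Matrix (Fin 2) (Fin 2) B × C |
        ∃ i : Fin n, q = (Y i, π (y i)) ∨ q = (star (Y i), star (π (y i)))},
      π (q.1 0 0) = q.2 := by
  have hsum : 0 ≤ ∑ i, star (y i) * y i := Finset.sum_nonneg fun i _ => star_mul_self_nonneg _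
  have hdefect : 0 ≤ 1 - ∑ i, star (y i) * y i :=
    sub_nonneg.2 ((CStarAlgebra.norm_le_one_iff_of_nonneg _ hsum).1 hy)
  have hπd : π d = 0 :=
    hd ▸ CFC.map_sqrt_eq_zero π hdefect (by rw [map_sub, map_one, hπy, sub_self])
  have hYi (i : Fin n) : (Y i, π (y i)) ∈ blockDiagCornerSubmonoid π := by
    rw [hY i]
    split_ifs
    exacts [pair_mem_blockDiagCornerSubmonoid hπd, pair_mem_blockDiagCornerSubmonoid (map_zero π),
      pair_mem_blockDiagCornerSubmonoid (map_zero π)]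
  intro q hq
  refine (Submonoid.closure_le.2 ?_ hq : q ∈ blockDiagCornerSubmonoid π).1
  rintro _ ⟨i, rfl | rfl⟩
  exacts [hYi i, star_mem_blockDiagCornerSubmonoid (hYi i)]

/-- Let `π : B → C` be a unital *-homomorphism, `y₁,…,yₙ ∈ B` with
`‖∑ yᵢ* yᵢ‖ ≤ 1` and `π(∑ yᵢ* yᵢ) = 1`, and let `ỹᵢ ∈ M₂(B)` be the dilations built from
`d = (1 - ∑ yᵢ* yᵢ)^{1/2}`.  Then every pair `(m, c)` in the submonoid of `M₂(B) × C`
generated by the pairs `(ỹᵢ, π(yᵢ))` and `(ỹᵢ*, π(yᵢ)*)` satisfies `π(m₁₁) = c`. -/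
theorem starAlgHom_entry_eq_of_mem_closure_dilated_pairs
    {B C : Type*} [CStarAlgebra B] [PartialOrder B] [StarOrderedRing B] [CStarAlgebra C]
    (π : B →⋆ₐ[ℂ] C)
    (n : ℕ) (hn : 2 ≤ n) (y : Fin n → B)
    (hy : ‖∑ i, star (y i) * y i‖ ≤ 1)
    (hπy : π (∑ i, star (y i) * y i) = 1)
    (d : B) (hd : d = CFC.sqrt (1 - ∑ i, star (y i) * y i))
    (Y : Fin n → Matrix (Fin 2) (Fin 2) B)
    (hY : ∀ i : Fin n, Y i =
      if (i : ℕ) = 0 then !![y i, 0; d, 0]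
      else if (i : ℕ) = 1 then !![y i, 0; 0, 1]
      else !![y i, 0; 0, 0]) :
    ∀ q ∈ Submonoid.closure {q : Matrix (Fin 2) (Fin 2) B × C |
        ∃ i : Fin n, q = (Y i, π (y i)) ∨ q = (star (Y i), star (π (y i)))},
      π (q.1 0 0) = q.2 :=
  starAlgHom_entry_eq_of_mem_closure_dilated_pairs_general π n y hy hπy d hd Y hY
end

section
/- Let π : B → C be a surjective *-homomorphism between C*-algebras, n ≥ 1, and x₁,…,xₙ ∈ C with ‖Σᵢ xᵢ*xᵢ‖ ≤ 1. Then there exist y₁,…,yₙ ∈ B with π(yᵢ) = xᵢ for all i and ‖Σᵢ yᵢ*yᵢ‖ ≤ 1. (The row-contraction relation ‖Σᵢ xᵢ*xᵢ‖ ≤ 1 is liftable along surjective *-homomorphisms.) -/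
open scoped CStarAlgebra

noncomputable def gfun : ℝ → ℝ := fun t => 1 - (max t 1) ^ (-(1/2) : ℝ)

lemma gfun_cont : Continuous gfun :=
  continuous_const.sub <| (continuous_id.max continuous_const).rpow_const
    (fun t => Or.inl (by positivity))

lemma gfun_zero : gfun 0 = 0 := by simp [gfun]

lemma gfun_eq_zero {t : ℝ} (ht : t ≤ 1) : gfun t = 0 := by
  simp [gfun, max_eq_right ht]

lemma hfun_le {t : ℝ} (ht : 0 ≤ t) : |t - t * gfun t - gfun t * t + gfun t * t * gfun t| ≤ 1 := by
  have key : t - t * gfun t - gfun t * t + gfun t * t * gfun t = t * (1 - gfun t)^2 := by ring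
  rw [key]
  rcases le_or_gt t 1 with h | h
  · rw [gfun_eq_zero h, abs_of_nonneg (by nlinarith)]; nlinarith
  · have htpos : (0:ℝ) < t := by linarith
    have h1 : 1 - gfun t = t ^ (-(1/2) : ℝ) := by simp [gfun, max_eq_left h.le]
    rw [h1]
    have h2 : (t ^ (-(1/2) : ℝ))^2 = t⁻¹ := by
      rw [sq, ← Real.rpow_add htpos]; norm_num [Real.rpow_neg_one]
    rw [h2, mul_inv_cancel₀ htpos.ne']
    simp

/-- The row-contraction relation `‖∑ xᵢ* xᵢ‖ ≤ 1` is liftable along surjective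
*-homomorphisms of C*-algebras: if `π : B → C` is a surjective *-homomorphism and
`x₁,…,xₙ ∈ C` satisfy `‖∑ xᵢ* xᵢ‖ ≤ 1`, then there exist lifts `yᵢ ∈ B` of the `xᵢ` with
`‖∑ yᵢ* yᵢ‖ ≤ 1`. -/
theorem exists_lift_of_norm_sum_star_mul_le_one
    {B C : Type*} [NonUnitalCStarAlgebra B] [NonUnitalCStarAlgebra C]
    (π : B →⋆ₙₐ[ℂ] C) (hπ : Function.Surjective π)
    (n : ℕ) (hn : 1 ≤ n) (x : Fin n → C)
    (hx : ‖∑ i, star (x i) * x i‖ ≤ 1) :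
    ∃ y : Fin n → B, (∀ i, π (y i) = x i) ∧ ‖∑ i, star (y i) * y i‖ ≤ 1 := by
  choose z hz using fun i => hπ (x i)
  set a : B := ∑ i, star (z i) * z i with ha_def
  have haSA : IsSelfAdjoint a := by
    rw [ha_def, IsSelfAdjoint, star_sum]
    exact Finset.sum_congr rfl fun i _ => by simp [star_mul]
  set b : C := ∑ i, star (x i) * x i with hb_def
  have hπa : π a = b := by
    rw [ha_def, hb_def, map_sum]
    exact Finset.sum_congr rfl fun i _ => by rw [map_mul, map_star, hz]
  have hbSA : IsSelfAdjoint b := by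
    rw [hb_def, IsSelfAdjoint, star_sum]
    exact Finset.sum_congr rfl fun i _ => by simp [star_mul]
  set G : B := cfcₙ gfun a with hG_def
  have hGSA : IsSelfAdjoint G := cfcₙ_predicate gfun a
  have hcont : ContinuousOn gfun (quasispectrum ℝ a) := gfun_cont.continuousOn
  refine ⟨fun i => z i - z i * G, fun i => ?_, ?_⟩
  · -- π (z i - z i * G) = x i
    have hπG : π G = cfcₙ gfun b := by
      rw [hG_def, ← hπa]
      exact NonUnitalStarAlgHom.map_cfcₙ π gfun a hcont gfun_zero
        (map_continuous π) haSA (hπa ▸ hbSA)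
    have hgb : cfcₙ gfun b = 0 := by
      rw [← cfcₙ_zero ℝ b]
      apply cfcₙ_congr
      intro t ht
      have ht1 : t ≤ 1 := by
        have h' := Unitization.quasispectrum_eq_spectrum_inr' ℝ ℂ b ▸ ht
        have hnorm := spectrum.norm_le_norm_of_mem h'
        rw [Unitization.norm_inr] at hnorm
        calc t ≤ |t| := le_abs_self t
        _ ≤ ‖b‖ := hnorm
        _ ≤ 1 := hx
      exact gfun_eq_zero ht1
    rw [map_sub, map_mul, hz, hπG, hgb, mul_zero, sub_zero]
  · -- norm bound
    have hsum : ∑ i, star (z i - z i * G) * (z i - z i * G)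
        = a - a * G - G * a + G * a * G := by
      have expand : ∀ i : Fin n, star (z i - z i * G) * (z i - z i * G)
          = star (z i) * z i - (star (z i) * z i) * G - G * (star (z i) * z i)
            + G * (star (z i) * z i) * G := by
        intro i
        rw [star_sub, star_mul, hGSA.star_eq]
        noncomm_ring
      rw [Finset.sum_congr rfl fun i _ => expand i]
      simp only [Finset.sum_add_distrib, Finset.sum_sub_distrib, ← Finset.sum_mul,
        ← Finset.mul_sum, ← ha_def]
    have hc1 : ContinuousOn (fun t : ℝ => t * gfun t) (quasispectrum ℝ a) :=
      (continuous_id.mul gfun_cont).continuousOn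
    have hc2 : ContinuousOn (fun t : ℝ => gfun t * t) (quasispectrum ℝ a) :=
      (gfun_cont.mul continuous_id).continuousOn
    have hc3 : ContinuousOn (fun t : ℝ => gfun t * t * gfun t) (quasispectrum ℝ a) :=
      ((gfun_cont.mul continuous_id).mul gfun_cont).continuousOn
    have h1 : a * G = cfcₙ (fun t : ℝ => t * gfun t) a := by
      conv_lhs => rw [← cfcₙ_id ℝ a, hG_def]
      exact (cfcₙ_mul _ _ a continuousOn_id rfl hcont gfun_zero).symm
    have h2 : G * a = cfcₙ (fun t : ℝ => gfun t * t) a := by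
      conv_lhs => rw [← cfcₙ_id ℝ a, hG_def]
      exact (cfcₙ_mul _ _ a hcont gfun_zero continuousOn_id rfl).symm
    have h3 : G * a * G = cfcₙ (fun t : ℝ => gfun t * t * gfun t) a := by
      rw [h2, hG_def]
      exact (cfcₙ_mul _ _ a hc2 (by simp [gfun_zero]) hcont gfun_zero).symm
    have key : cfcₙ (fun t : ℝ => t - t * gfun t - gfun t * t + gfun t * t * gfun t) a
        = a - a * G - G * a + G * a * G := by
      calc cfcₙ (fun t : ℝ => t - t * gfun t - gfun t * t + gfun t * t * gfun t) a
          = cfcₙ (fun t : ℝ => t - t * gfun t - gfun t * t) a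
            + cfcₙ (fun t : ℝ => gfun t * t * gfun t) a :=
            cfcₙ_add (fun t : ℝ => t - t * gfun t - gfun t * t)
              (fun t : ℝ => gfun t * t * gfun t) a
              ((continuousOn_id.sub hc1).sub hc2) (by simp [gfun_zero]) hc3
              (by simp [gfun_zero])
        _ = cfcₙ (fun t : ℝ => t - t * gfun t) a - cfcₙ (fun t : ℝ => gfun t * t) a
            + cfcₙ (fun t : ℝ => gfun t * t * gfun t) a := by
            rw [cfcₙ_sub (fun t : ℝ => t - t * gfun t) (fun t : ℝ => gfun t * t) a
              (continuousOn_id.sub hc1) (by simp [gfun_zero]) hc2 (by simp [gfun_zero])]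
        _ = cfcₙ (fun t : ℝ => t) a - cfcₙ (fun t : ℝ => t * gfun t) a
            - cfcₙ (fun t : ℝ => gfun t * t) a
            + cfcₙ (fun t : ℝ => gfun t * t * gfun t) a := by
            rw [cfcₙ_sub (fun t : ℝ => t) (fun t : ℝ => t * gfun t) a
              continuousOn_id rfl hc1 (by simp [gfun_zero])]
        _ = a - a * G - G * a + G * a * G := by rw [cfcₙ_id' ℝ a, ← h1, ← h2, ← h3]
    rw [← key] at hsum
    rw [hsum]
    apply norm_cfcₙ_le
    intro t ht
    have ht0 : 0 ≤ t := by
      letI := CStarAlgebra.spectralOrder (Unitization ℂ B)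
      haveI := CStarAlgebra.spectralOrderedRing (Unitization ℂ B)
      rw [Unitization.quasispectrum_eq_spectrum_inr' ℝ ℂ] at ht
      refine spectrum_nonneg_of_nonneg ?_ ht
      have hcast : ((∑ i, star (z i) * z i : B) : Unitization ℂ B)
          = ∑ i, ((star (z i) * z i : B) : Unitization ℂ B) :=
        map_sum (Unitization.inrNonUnitalStarAlgHom ℂ B) _ _
      rw [ha_def, hcast]
      refine Finset.sum_nonneg fun i _ => ?_
      rw [Unitization.inr_mul, Unitization.inr_star]
      exact star_mul_self_nonneg _
    simpa using hfun_le ht0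
end

section
/- Let A be a C*-algebra and I ⊆ A a closed two-sided ideal. If x ∈ M(A) satisfies x·a ∈ I and a·x ∈ I for all a ∈ A (that is, x ∈ M(A, I)), and moreover x·b = 0 and b·x = 0 for all b ∈ I, then x = 0. (In other words, I is an essential ideal in M(A, I), so the canonical map M(A, I) → M(I) is injective.) -/
open scoped MultiplierAlgebra

section StarMem

variable {A : Type*} [NonUnitalCStarAlgebra A]

private lemma cfcₙ_four_term (K : ℝ → ℝ) (hK : Continuous K) (hK0 : K 0 = 0)
    (c : A) (hsa : IsSelfAdjoint c) :
    cfcₙ (fun t => (t - t * K t) - (K t * t - K t * (t * K t))) c =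
      c - c * cfcₙ K c - (cfcₙ K c * c - cfcₙ K c * (c * cfcₙ K c)) := by
  rw [cfcₙ_sub _ _ c (by fun_prop) (by simp [hK0]) (by fun_prop) (by simp [hK0]),
    cfcₙ_sub _ _ c (by fun_prop) (by simp) (by fun_prop) (by simp [hK0]),
    cfcₙ_sub _ _ c (by fun_prop) (by simp [hK0]) (by fun_prop) (by simp [hK0]),
    cfcₙ_mul _ _ c (by fun_prop) (by simp) (by fun_prop) (by simp [hK0]),
    cfcₙ_mul _ _ c (by fun_prop) (by simp [hK0]) (by fun_prop) (by simp),
    cfcₙ_mul _ _ c (by fun_prop) (by simp [hK0]) (by fun_prop) (by simp [hK0]),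
    cfcₙ_mul _ _ c (by fun_prop) (by simp) (by fun_prop) (by simp [hK0]),
    cfcₙ_id' ℝ c]

private lemma cfcₙ_sq_term (K : ℝ → ℝ) (hK : Continuous K) (hK0 : K 0 = 0)
    (r : ℝ) (c : A) (hsa : IsSelfAdjoint c) :
    cfcₙ (fun t => r * (t * t - t * (t * K t))) c =
      r • (c * c - c * (c * cfcₙ K c)) := by
  rw [cfcₙ_const_mul r _ c (by fun_prop) (by simp [hK0]),
    cfcₙ_sub _ _ c (by fun_prop) (by simp) (by fun_prop) (by simp),
    cfcₙ_mul _ _ c (by fun_prop) (by simp) (by fun_prop) (by simp),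
    cfcₙ_mul _ _ c (by fun_prop) (by simp) (by fun_prop) (by simp [hK0]),
    cfcₙ_mul _ _ c (by fun_prop) (by simp) (by fun_prop) (by simp [hK0]),
    cfcₙ_id' ℝ c]

private noncomputable def kfun (n : ℕ) : ℝ → ℝ := fun t => t^2 / (t^2 + 1/(n+1))

private lemma kfun_cont (n : ℕ) : Continuous (kfun n) := by
  apply Continuous.div (by fun_prop) (by fun_prop)
  intro t
  have : (0:ℝ) < 1/((n:ℕ)+1 : ℝ) := by positivity
  positivity

private lemma kfun_zero (n : ℕ) : kfun n 0 = 0 := by simp [kfun]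

private lemma star_mem_of_isClosed (I : TwoSidedIdeal A) (hI : IsClosed (I : Set A))
    {b : A} (hb : b ∈ I) : star b ∈ I := by
  obtain ⟨c, hcc, hc, hcsa⟩ : ∃ c, star b * b = c ∧ c ∈ I ∧ IsSelfAdjoint c :=
    ⟨star b * b, rfl, I.mul_mem_left _ _ hb, IsSelfAdjoint.star_mul_self b⟩
  have hεpos : ∀ n : ℕ, (0:ℝ) < 1 / (n + 1) := fun n => by positivity
  have hesa : ∀ n, IsSelfAdjoint (cfcₙ (kfun n) c) := fun n => cfcₙ_predicate _ c
  -- eₙ ∈ I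
  have heI : ∀ n, cfcₙ (kfun n) c ∈ I := by
    intro n
    have hkey : (kfun n) = fun t => ((n : ℝ) + 1) * (t * t - t * (t * kfun n t)) := by
      funext t
      have hden : (0:ℝ) < t^2 + 1/((n:ℝ)+1) := by
        have := hεpos n; positivity
      have h2 : ((n:ℝ) + 1) ≠ 0 := by positivity
      show t^2 / (t^2 + 1/((n:ℝ)+1)) = ((n:ℝ)+1) * (t * t - t * (t * (t^2 / (t^2 + 1/((n:ℝ)+1)))))
      field_simp
      ring
    rw [show cfcₙ (kfun n) c = cfcₙ (fun t => ((n : ℝ) + 1) * (t * t - t * (t * kfun n t))) c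
        from by rw [← hkey]]
    rw [cfcₙ_sq_term (kfun n) (kfun_cont n) (kfun_zero n) ((n : ℝ) + 1) c hcsa]
    rw [show ((n : ℝ) + 1) = ((n + 1 : ℕ) : ℝ) from by push_cast; ring,
      Nat.cast_smul_eq_nsmul]
    exact nsmul_mem (sub_mem (I.mul_mem_right _ _ hc) (I.mul_mem_right _ _ hc)) _
  -- the approximation
  have happrox : ∀ n, ‖star b - cfcₙ (kfun n) c * star b‖ ≤
      Real.sqrt (Real.sqrt (1 / (n + 1)) / 2) := by
    intro n
    have hyy : (star b - cfcₙ (kfun n) c * star b) * star (star b - cfcₙ (kfun n) c * star b) =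
        cfcₙ (fun t => (t - t * kfun n t) - (kfun n t * t - kfun n t * (t * kfun n t))) c := by
      rw [cfcₙ_four_term (kfun n) (kfun_cont n) (kfun_zero n) c hcsa]
      rw [star_sub, star_mul, star_star, (hesa n).star_eq, ← hcc]
      noncomm_ring
    have hbound : ∀ t ∈ quasispectrum ℝ c,
        ‖(t - t * kfun n t) - (kfun n t * t - kfun n t * (t * kfun n t))‖ ≤
          Real.sqrt (1 / (n + 1)) / 2 := by
      intro t _
      have hs : 0 < Real.sqrt (1/((n:ℝ)+1)) := Real.sqrt_pos.mpr (hεpos n)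
      have hs2 : Real.sqrt (1/((n:ℝ)+1)) * Real.sqrt (1/((n:ℝ)+1)) = 1 / ((n:ℝ) + 1) :=
        Real.mul_self_sqrt (hεpos n).le
      set s : ℝ := Real.sqrt (1/((n:ℝ)+1)) with hs_def
      have hden : (0:ℝ) < t^2 + 1 / ((n:ℝ)+1) := by have := hεpos n; positivity
      have hφ : (t - t * kfun n t) - (kfun n t * t - kfun n t * (t * kfun n t)) =
          t * ((1 / ((n:ℝ)+1)) / (t^2 + 1 / ((n:ℝ)+1)))^2 := by
        simp only [kfun]
        field_simp
        ring
      have habs : |((1 / ((n:ℝ)+1)) / (t^2 + 1 / ((n:ℝ)+1)))^2| =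
          ((1 / ((n:ℝ)+1)) / (t^2 + 1 / ((n:ℝ)+1)))^2 := abs_of_nonneg (sq_nonneg _)
      rw [hφ, Real.norm_eq_abs, abs_mul, habs, ← hs2]
      have hu : 0 ≤ |t| := abs_nonneg t
      have htu : t^2 = |t|^2 := (sq_abs t).symm
      rw [htu, div_pow, mul_div_assoc', div_le_div_iff₀ (by positivity) (by norm_num)]
      nlinarith [sq_nonneg (|t| * s - s * s), sq_nonneg (|t| * |t|), sq_nonneg (|t| * s),
        mul_nonneg (mul_nonneg hu hu) (mul_nonneg hu hu),
        mul_pos hs hs, mul_nonneg hu hs.le]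
    have hnorm : ‖(star b - cfcₙ (kfun n) c * star b) *
        star (star b - cfcₙ (kfun n) c * star b)‖ ≤ Real.sqrt (1 / (n + 1)) / 2 := by
      rw [hyy]
      exact norm_cfcₙ_le hbound
    rw [CStarRing.norm_self_mul_star] at hnorm
    rw [Real.le_sqrt (norm_nonneg _)]
    swap
    · positivity
    calc ‖star b - cfcₙ (kfun n) c * star b‖ ^ 2
        = ‖star b - cfcₙ (kfun n) c * star b‖ * ‖star b - cfcₙ (kfun n) c * star b‖ := sq _
      _ ≤ Real.sqrt (1 / (n + 1)) / 2 := hnorm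
  -- take the limit
  have h1 : Filter.Tendsto (fun n : ℕ => 1 / ((n:ℝ) + 1)) Filter.atTop (nhds 0) :=
    tendsto_one_div_add_atTop_nhds_zero_nat
  have h2 : Filter.Tendsto (fun n : ℕ => Real.sqrt (Real.sqrt (1 / ((n:ℝ) + 1)) / 2))
      Filter.atTop (nhds 0) := by
    have t1 : Filter.Tendsto (fun n : ℕ => Real.sqrt (1/((n:ℝ)+1))) Filter.atTop (nhds 0) :=
      (Real.continuous_sqrt.tendsto' 0 0 (by simp)).comp h1
    have t2 : Filter.Tendsto (fun n : ℕ => Real.sqrt (1/((n:ℝ)+1)) / 2) Filter.atTop (nhds 0) := by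
      have := t1.div_const 2
      rwa [zero_div] at this
    exact (Real.continuous_sqrt.tendsto' 0 0 (by simp)).comp t2
  have htend : Filter.Tendsto (fun n => cfcₙ (kfun n) c * star b) Filter.atTop (nhds (star b)) := by
    rw [← tendsto_sub_nhds_zero_iff]
    rw [tendsto_zero_iff_norm_tendsto_zero]
    exact squeeze_zero (fun n => norm_nonneg _)
      (fun n => by simpa [norm_sub_rev] using happrox n) h2
  exact hI.mem_of_tendsto htend
    (Filter.Eventually.of_forall fun n => I.mul_mem_right _ _ (heI n))

end StarMem

/-- Let `I` be a closed two-sided ideal in a C*-algebra `A`.  If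
`x ∈ M(A, I)` (i.e. `x·a ∈ I` and `a·x ∈ I` for all `a : A`) annihilates `I`
(i.e. `x·b = 0` and `b·x = 0` for all `b ∈ I`), then `x = 0`.  Here `x·a = x.toProd.1 a`
and `a·x = x.toProd.2 a` denote the left and right actions of the multiplier `x`. -/
theorem multiplier_eq_zero_of_annihilates_ideal
    {A : Type*} [NonUnitalCStarAlgebra A]
    (I : TwoSidedIdeal A) (hI : IsClosed (I : Set A))
    (x : 𝓜(ℂ, A))
    (hxI : ∀ a : A, x.toProd.1 a ∈ I ∧ x.toProd.2 a ∈ I)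
    (hx0 : ∀ b ∈ I, x.toProd.1 b = 0 ∧ x.toProd.2 b = 0) :
    x = 0 := by
  have hL : ∀ a : A, x.toProd.1 a = 0 := by
    intro a
    have hmem : star (x.toProd.1 a) ∈ I :=
      star_mem_of_isClosed I hI (hxI a).1
    have hcentral : x.toProd.2 (star (x.toProd.1 a)) * a =
        star (x.toProd.1 a) * x.toProd.1 a := x.central _ _
    rw [(hx0 _ hmem).2, zero_mul] at hcentral
    have := CStarRing.norm_star_mul_self (x := x.toProd.1 a)
    rw [← hcentral, norm_zero] at this
    exact norm_eq_zero.mp (mul_self_eq_zero.mp this.symm)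
  have hR : ∀ a : A, x.toProd.2 a = 0 := by
    intro a
    have hmem : star (x.toProd.2 a) ∈ I :=
      star_mem_of_isClosed I hI (hxI a).2
    have hcentral : x.toProd.2 a * star (x.toProd.2 a) =
        a * x.toProd.1 (star (x.toProd.2 a)) := x.central _ _
    rw [(hx0 _ hmem).1, mul_zero] at hcentral
    have := CStarRing.norm_self_mul_star (x := x.toProd.2 a)
    rw [hcentral, norm_zero] at this
    exact norm_eq_zero.mp (mul_self_eq_zero.mp this.symm)
  apply DoubleCentralizer.ext
  apply Prod.ext
  · exact ContinuousLinearMap.ext hL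
  · exact ContinuousLinearMap.ext hR
end

section
/- Let A be a C*-algebra and I ⊆ A a closed two-sided ideal, regarded with its induced structure as a C*-algebra in its own right. Let x₁, x₂ ∈ M(A, I) and let y ∈ M(I) be a multiplier of I. Then there exists z ∈ M(A, I) such that for all b ∈ I: z·b = x₁·(y·(x₂·b)) and b·z = ((b·x₁)·y)·x₂ (note x₂·b and b·x₁ lie in I, so y acts on them). In other words, the canonical image of M(A, I) in M(I) is a hereditary C*-subalgebra of M(I). -/
open scoped MultiplierAlgebra

/-- Let `I` be a closed two-sided ideal of a C*-algebra `A`, regarded as a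
C*-algebra in its own right, let `x₁, x₂ ∈ M(A, I)` and let `y ∈ M(I)`.  Then there is
`z ∈ M(A, I)` with `z·b = x₁·(y·(x₂·b))` and `b·z = ((b·x₁)·y)·x₂` for all `b ∈ I`;
in other words the canonical image of `M(A, I)` in `M(I)` is a hereditary subalgebra.
Here `m·a = m.toProd.1 a` and `a·m = m.toProd.2 a` for a multiplier `m`. -/
theorem multiplier_ideal_image_hereditary
    {A : Type*} [NonUnitalCStarAlgebra A]
    (I : NonUnitalStarSubalgebra ℂ A) [hIc : IsClosed (I : Set A)]
    (hideal : ∀ (a : A) (b : I), a * (b : A) ∈ I ∧ (b : A) * a ∈ I)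
    (x₁ x₂ : 𝓜(ℂ, A))
    (hx₁ : ∀ a : A, x₁.toProd.1 a ∈ I ∧ x₁.toProd.2 a ∈ I)
    (hx₂ : ∀ a : A, x₂.toProd.1 a ∈ I ∧ x₂.toProd.2 a ∈ I)
    (y : 𝓜(ℂ, I)) :
    ∃ z : 𝓜(ℂ, A),
      (∀ a : A, z.toProd.1 a ∈ I ∧ z.toProd.2 a ∈ I) ∧
      (∀ b : I, z.toProd.1 (b : A) =
        x₁.toProd.1 (y.toProd.1 ⟨x₂.toProd.1 (b : A), (hx₂ (b : A)).1⟩ : A)) ∧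
      (∀ b : I, z.toProd.2 (b : A) =
        x₂.toProd.2 (y.toProd.2 ⟨x₁.toProd.2 (b : A), (hx₁ (b : A)).2⟩ : A)) := by
  -- inclusion of `I` into `A` as a continuous linear map
  let ι : I →L[ℂ] A :=
    { toFun := Subtype.val
      map_add' := fun _ _ => rfl
      map_smul' := fun _ _ => rfl }
  -- corestriction of `x₂.toProd.1` to `I`
  let f₂ : A →L[ℂ] I :=
    { toFun := fun a => ⟨x₂.toProd.1 a, (hx₂ a).1⟩
      map_add' := fun a b => Subtype.ext (map_add _ a b)
      map_smul' := fun c a => Subtype.ext (map_smul x₂.toProd.1 c a)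
      cont := by
        apply Continuous.subtype_mk
        exact x₂.toProd.1.continuous }
  -- corestriction of `x₁.toProd.2` to `I`
  let g₁ : A →L[ℂ] I :=
    { toFun := fun a => ⟨x₁.toProd.2 a, (hx₁ a).2⟩
      map_add' := fun a b => Subtype.ext (map_add _ a b)
      map_smul' := fun c a => Subtype.ext (map_smul x₁.toProd.2 c a)
      cont := by
        apply Continuous.subtype_mk
        exact x₁.toProd.2.continuous }
  let L : A →L[ℂ] A := x₁.toProd.1.comp (ι.comp (y.toProd.1.comp f₂))
  let R : A →L[ℂ] A := x₂.toProd.2.comp (ι.comp (y.toProd.2.comp g₁))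
  have central : ∀ a b : A, R a * b = a * L b := by
    intro a b
    have h1 : R a * b = (y.toProd.2 (g₁ a) : A) * x₂.toProd.1 b := x₂.central _ b
    have h2 : (y.toProd.2 (g₁ a) : A) * x₂.toProd.1 b
        = ((y.toProd.2 (g₁ a)) * f₂ b : I) := rfl
    have h3 : (y.toProd.2 (g₁ a)) * f₂ b = (g₁ a) * y.toProd.1 (f₂ b) :=
      y.central (g₁ a) (f₂ b)
    have h4 : ((g₁ a) * y.toProd.1 (f₂ b) : I)
        = x₁.toProd.2 a * (y.toProd.1 (f₂ b) : A) := rfl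
    have h5 : x₁.toProd.2 a * (y.toProd.1 (f₂ b) : A)
        = a * x₁.toProd.1 (y.toProd.1 (f₂ b) : A) := x₁.central a _
    calc R a * b = ((y.toProd.2 (g₁ a)) * f₂ b : I) := by rw [h1, h2]
      _ = _ := by rw [h3, h4, h5]; rfl
  refine ⟨⟨(L, R), central⟩, ?_, fun b => rfl, fun b => rfl⟩
  intro a
  exact ⟨(hx₁ _).1, (hx₂ _).2⟩
end
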